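/- Let U and Û be sub-Markovian resolvents on L^p and L^{p*} in weak duality with respect to a σ-finite sub-invariant measure m. If u ∈ L^p(E,m), 1 ≤ p < ∞, satisfies αU_α u = u m-a.e. for all α > 0, then αÛ_α u = u m-a.e. for all α > 0, and conversely. -/

import Mathlib

open MeasureTheory ProbabilityTheory Filter
open scoped NNReal ENNReal

/-- The resolvent operators acting on real functions: `U_α f (x) = ∫ f d(U α x)`. -/
noncomputable def Uop {E : Type*} [MeasurableSpace E]
    (U : ℝ → Kernel E E) (α : ℝ) (f : E → ℝ) (x : E) : ℝ :=
  ∫ y, f y ∂(U α x)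

/-- `(U_α)` is a sub-Markovian resolvent of kernels: `α U_α 1 ≤ 1`. -/
def SubMarkovResolvent {E : Type*} [MeasurableSpace E] (U : ℝ → Kernel E E) : Prop :=
  ∀ α > (0:ℝ), ∀ x : E, (U α x) Set.univ ≤ ENNReal.ofReal α⁻¹

/-- `m` is sub-invariant for `(U_α)`: `m(α U_α f) ≤ m(f)` for all `f ≥ 0` measurable. -/
def SubInvariantMeasure {E : Type*} [MeasurableSpace E]
    (m : Measure E) (U : ℝ → Kernel E E) : Prop :=
  ∀ α > (0:ℝ), ∀ f : E → ℝ≥0∞, Measurable f →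
    ∫⁻ x, ENNReal.ofReal α * ∫⁻ y, f y ∂(U α x) ∂m ≤ ∫⁻ x, f x ∂m

/-- Weak duality of `(U_α)` and `(Û_α)` w.r.t. `m`: `∫ f U_α g dm = ∫ g Û_α f dm`. -/
def WeakDuality {E : Type*} [MeasurableSpace E]
    (m : Measure E) (U Uhat : ℝ → Kernel E E) : Prop :=
  ∀ α > (0:ℝ), ∀ f g : E → ℝ≥0∞, Measurable f → Measurable g →
    ∫⁻ x, f x * ∫⁻ y, g y ∂(U α x) ∂m = ∫⁻ x, g x * ∫⁻ y, f y ∂(Uhat α x) ∂m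

/-- `u` is `U`-invariant: `U_α(uf) = u U_α f` m-a.e. for all bounded measurable `f`, `α > 0`. -/
def UInvariant {E : Type*} [MeasurableSpace E]
    (m : Measure E) (U : ℝ → Kernel E E) (u : E → ℝ) : Prop :=
  ∀ α > (0:ℝ), ∀ f : E → ℝ, Measurable f → (∃ C, ∀ x, |f x| ≤ C) →
    Uop U α (fun y => u y * f y) =ᵐ[m] fun x => u x * Uop U α f x

/-!
Fix `α > 0` and write `κ = α U_α`, `κ̂ = α Û_α`: these are sub-Markov kernels in duality with
respect to `m`, and `m` is sub-invariant for both, so both are contractions of `L²(m)`. If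
`G ∈ L²₊` is `κ`-fixed, then `∫ G κ̂G dm = ∫ G κG dm = ‖G‖²` while `‖κ̂G‖ ≤ ‖G‖`, which forces
`κ̂G = G`.

A fixed `u ∈ L^p` is reduced to this case through its positive and negative parts. If `κu = u`
then `W = u⁺` satisfies `W ≤ κW`, hence `(W - c)⁺ ≤ κ(W - c)⁺` for every constant `c > 0`;
as `(W - c)⁺` is integrable (Chebyshev), sub-invariance upgrades this to equality. Differences of
two such functions give the bounded truncations `min ((W - c)⁺, d)`, which lie in `L²`, so they
are `κ̂`-fixed, and monotone convergence lets `c ↓ 0`, `d ↑ ∞`.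
-/

theorem ENNReal.two_mul_le_add_sq (a b : ℝ≥0∞) : 2 * a * b ≤ a ^ 2 + b ^ 2 := by
  rcases eq_or_ne a ∞ with rfl | ha
  · simp [ENNReal.top_pow two_ne_zero]
  rcases eq_or_ne b ∞ with rfl | hb
  · simp [ENNReal.top_pow two_ne_zero]
  lift a to ℝ≥0 using ha
  lift b to ℝ≥0 using hb
  exact_mod_cast _root_.two_mul_le_add_sq a b

theorem ENNReal.eq_of_add_sq_le_two_mul {a b : ℝ≥0∞} (ha : a ≠ ∞) (hb : b ≠ ∞)
    (h : a ^ 2 + b ^ 2 ≤ 2 * a * b) : a = b := by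
  lift a to ℝ≥0 using ha
  lift b to ℝ≥0 using hb
  have h' : (a : ℝ) ^ 2 + (b : ℝ) ^ 2 ≤ 2 * a * b := by exact_mod_cast h
  exact_mod_cast NNReal.coe_injective (by nlinarith [sq_nonneg ((a : ℝ) - b)])

theorem ENNReal.sub_sub_eq_min {a : ℝ≥0∞} (ha : a ≠ ∞) (b : ℝ≥0∞) : a - (a - b) = min a b := by
  rcases le_total a b with h | h
  · rw [tsub_eq_zero_of_le h, tsub_zero, min_eq_left h]
  · rw [ENNReal.sub_sub_cancel ha h, min_eq_right h]

theorem enorm_eq_ofReal_add_ofReal_neg (r : ℝ) :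
    ‖r‖ₑ = ENNReal.ofReal r + ENNReal.ofReal (-r) := by
  rcases le_total 0 r with h | h
  · rw [ENNReal.ofReal_of_nonpos (neg_nonpos.2 h), add_zero, Real.enorm_eq_ofReal h]
  · rw [ENNReal.ofReal_of_nonpos h, zero_add, ← enorm_neg, Real.enorm_eq_ofReal (neg_nonneg.2 h)]

section Measure

variable {E : Type*} [MeasurableSpace E] {μ : Measure E}

lemma lintegral_sub_const_le_lintegral_tsub (hμ : μ Set.univ ≤ 1) (f : E → ℝ≥0∞) (c : ℝ≥0∞) :
    ∫⁻ y, f y ∂μ - c ≤ ∫⁻ y, f y - c ∂μ := by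
  have hc : ∫⁻ _, c ∂μ ≤ c := by
    simpa only [lintegral_const] using mul_le_of_le_one_right' hμ
  exact (tsub_le_tsub_left hc _).trans (lintegral_sub_le _ f measurable_const)

lemma sq_lintegral_le_lintegral_sq (hμ : μ Set.univ ≤ 1) {f : E → ℝ≥0∞}
    (hf : AEMeasurable f μ) : (∫⁻ y, f y ∂μ) ^ 2 ≤ ∫⁻ y, f y ^ 2 ∂μ := by
  have hhalf : ((2 : ℕ) : ℝ)⁻¹ + ((2 : ℕ) : ℝ)⁻¹ = 1 := by norm_num
  have hcs := ENNReal.lintegral_mul_norm_pow_le (hf.pow_const 2) (aemeasurable_const (b := 1))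
    (by positivity) (by positivity) hhalf
  simp only [ENNReal.pow_rpow_inv_natCast two_ne_zero, ENNReal.one_rpow, mul_one,
    lintegral_const, one_mul] at hcs
  calc (∫⁻ y, f y ∂μ) ^ 2
      ≤ ((∫⁻ y, f y ^ 2 ∂μ) ^ ((2 : ℕ) : ℝ)⁻¹ * μ Set.univ ^ ((2 : ℕ) : ℝ)⁻¹) ^ 2 := by
        gcongr
    _ ≤ ((∫⁻ y, f y ^ 2 ∂μ) ^ ((2 : ℕ) : ℝ)⁻¹) ^ 2 := by
        gcongr; exact mul_le_of_le_one_right' (ENNReal.rpow_le_one hμ (by positivity))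
    _ = ∫⁻ y, f y ^ 2 ∂μ := ENNReal.rpow_inv_natCast_pow two_ne_zero _

-- No integrability is needed: the Bochner integral of a non-integrable function is `0`.
lemma ofReal_integral_le_lintegral_ofReal (f : E → ℝ) :
    ENNReal.ofReal (∫ y, f y ∂μ) ≤ ∫⁻ y, ENNReal.ofReal (f y) ∂μ := by
  by_cases hf : Integrable f μ
  · rw [integral_eq_lintegral_pos_part_sub_lintegral_neg_part hf]
    exact (ENNReal.ofReal_le_ofReal (sub_le_self _ ENNReal.toReal_nonneg)).trans
      ENNReal.ofReal_toReal_le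
  · simp [integral_undef hf]

lemma integral_eq_of_lintegral_ofReal_eq {f : E → ℝ} (hf : AEStronglyMeasurable f μ) {r : ℝ}
    (hpos : ∫⁻ y, ENNReal.ofReal (f y) ∂μ = ENNReal.ofReal r)
    (hneg : ∫⁻ y, ENNReal.ofReal (-f y) ∂μ = ENNReal.ofReal (-r)) :
    ∫ y, f y ∂μ = r := by
  have hint : Integrable f μ := by
    refine ⟨hf, ?_⟩
    simp only [HasFiniteIntegral, enorm_eq_ofReal_add_ofReal_neg]
    rw [lintegral_add_left' hf.aemeasurable.ennreal_ofReal, hpos, hneg]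
    exact ENNReal.add_lt_top.2 ⟨ENNReal.ofReal_lt_top, ENNReal.ofReal_lt_top⟩
  rw [integral_eq_lintegral_pos_part_sub_lintegral_neg_part hint, hpos, hneg,
    ENNReal.toReal_ofReal', ENNReal.toReal_ofReal']
  rcases le_total 0 r with h | h <;> simp [h]

lemma MeasureTheory.MemLp.lintegral_enorm_tsub_ne_top {p : ℝ≥0∞} (hp1 : 1 ≤ p) (hp : p ≠ ∞)
    {f : E → ℝ} (hf : MemLp f p μ) {c : ℝ≥0∞} (hc : c ≠ 0) : ∫⁻ x, ‖f x‖ₑ - c ∂μ ≠ ∞ := by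
  set S := {x | c ≤ ‖f x‖ₑ}
  have hS : μ S < ∞ :=
    hf.meas_ge_lt_top'_enorm (zero_lt_one.trans_le hp1).ne' hp hc (by simp)
  have : IsFiniteMeasure (μ.restrict S) := isFiniteMeasure_restrict.2 hS.ne
  have hle : ∀ x, ‖f x‖ₑ - c ≤ S.indicator (fun x => ‖f x‖ₑ) x := fun x => by
    by_cases hx : x ∈ S
    · simp [Set.indicator_of_mem hx]
    · rw [Set.indicator_of_notMem hx, tsub_eq_zero_of_le (le_of_not_ge hx)]
  refine ne_top_of_le_ne_top ?_ ((lintegral_mono hle).trans (lintegral_indicator_le _ S))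
  exact ((hf.restrict S).integrable hp1).hasFiniteIntegral.ne

end Measure

section Kernel

variable {E : Type*} [MeasurableSpace E] {m : Measure E} {κ κ' : Kernel E E}

def KernelDuality (m : Measure E) (κ κ' : Kernel E E) : Prop :=
  ∀ f g : E → ℝ≥0∞, Measurable f → Measurable g →
    ∫⁻ x, f x * ∫⁻ y, g y ∂κ x ∂m = ∫⁻ x, g x * ∫⁻ y, f y ∂κ' x ∂m

lemma lintegral_lintegral_le_of_comp_le (hκm : κ ∘ₘ m ≤ m) {f : E → ℝ≥0∞} (hf : Measurable f) :
    ∫⁻ x, ∫⁻ y, f y ∂κ x ∂m ≤ ∫⁻ x, f x ∂m := by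
  rw [← Measure.lintegral_bind κ.aemeasurable hf.aemeasurable]
  exact lintegral_mono' hκm le_rfl

lemma ae_integral_kernel_congr (hκm : κ ∘ₘ m ≤ m) {u w : E → ℝ} (h : u =ᵐ[m] w) :
    ∀ᵐ x ∂m, ∫ y, u y ∂κ x = ∫ y, w y ∂κ x := by
  filter_upwards [Measure.ae_ae_of_ae_comp ((Measure.absolutelyContinuous_of_le hκm).ae_le h)]
    with x hx
  exact integral_congr_ae hx

lemma lintegral_kernel_ae_eq_of_ae_le (hκm : κ ∘ₘ m ≤ m) {f : E → ℝ≥0∞} (hf : Measurable f)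
    (hf_int : ∫⁻ x, f x ∂m ≠ ∞) (hle : ∀ᵐ x ∂m, f x ≤ ∫⁻ y, f y ∂κ x) :
    (fun x => ∫⁻ y, f y ∂κ x) =ᵐ[m] f :=
  (ae_eq_of_ae_le_of_lintegral_le hle hf_int hf.lintegral_kernel.aemeasurable
    (lintegral_lintegral_le_of_comp_le hκm hf)).symm

lemma lintegral_kernel_tsub_ae_eq {f g : E → ℝ≥0∞} (hg : Measurable g) (hgf : g ≤ f)
    (hg_fin : ∀ᵐ x ∂m, g x ≠ ∞) (hf_fix : (fun x => ∫⁻ y, f y ∂κ x) =ᵐ[m] f)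
    (hg_fix : (fun x => ∫⁻ y, g y ∂κ x) =ᵐ[m] g) :
    (fun x => ∫⁻ y, f y - g y ∂κ x) =ᵐ[m] fun x => f x - g x := by
  filter_upwards [hf_fix, hg_fix, hg_fin] with x hfx hgx hgx_fin
  rw [lintegral_sub hg (hgx ▸ hgx_fin) (ae_of_all _ hgf), hfx, hgx]

lemma lintegral_kernel_iSup_ae_eq {G : ℕ → E → ℝ≥0∞} (hG : ∀ n, Measurable (G n))
    (hG_mono : Monotone G) (hG_fix : ∀ n, (fun x => ∫⁻ y, G n y ∂κ x) =ᵐ[m] G n) :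
    (fun x => ∫⁻ y, ⨆ n, G n y ∂κ x) =ᵐ[m] fun x => ⨆ n, G n x := by
  filter_upwards [ae_all_iff.2 hG_fix] with x hx
  rw [lintegral_iSup hG hG_mono]
  exact iSup_congr hx

lemma lintegral_kernel_dual_ae_eq_of_sq_lintegral_ne_top
    (hκ' : ∀ x, κ' x Set.univ ≤ 1) (hκ'm : κ' ∘ₘ m ≤ m)
    (hdual : KernelDuality m κ κ')
    {G : E → ℝ≥0∞} (hG : Measurable G) (hG_sq : ∫⁻ x, G x ^ 2 ∂m ≠ ∞)
    (hG_fix : (fun x => ∫⁻ y, G y ∂κ x) =ᵐ[m] G) :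
    (fun x => ∫⁻ y, G y ∂κ' x) =ᵐ[m] G := by
  set Ĝ : E → ℝ≥0∞ := fun x => ∫⁻ y, G y ∂κ' x
  have hĜ : Measurable Ĝ := hG.lintegral_kernel
  have hĜ_sq : ∫⁻ x, Ĝ x ^ 2 ∂m ≤ ∫⁻ x, G x ^ 2 ∂m :=
    calc ∫⁻ x, Ĝ x ^ 2 ∂m ≤ ∫⁻ x, ∫⁻ y, G y ^ 2 ∂κ' x ∂m :=
          lintegral_mono fun x => sq_lintegral_le_lintegral_sq (hκ' x) hG.aemeasurable
      _ ≤ ∫⁻ x, G x ^ 2 ∂m := lintegral_lintegral_le_of_comp_le hκ'm (hG.pow_const 2)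
  have hcross : ∫⁻ x, 2 * G x * Ĝ x ∂m = 2 * ∫⁻ x, G x ^ 2 ∂m := by
    simp_rw [mul_assoc]
    rw [lintegral_const_mul _ (f := fun x => G x * Ĝ x) (hG.mul hĜ), ← hdual G G hG hG]
    congr 1
    refine lintegral_congr_ae ?_
    filter_upwards [hG_fix] with x hx
    rw [hx, sq]
  have hsum : ∫⁻ x, G x ^ 2 + Ĝ x ^ 2 ∂m ≤ ∫⁻ x, 2 * G x * Ĝ x ∂m := by
    rw [lintegral_add_left (hG.pow_const 2), hcross, two_mul]
    gcongr
  have hsq_eq : (fun x => 2 * G x * Ĝ x) =ᵐ[m] fun x => G x ^ 2 + Ĝ x ^ 2 :=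
    ae_eq_of_ae_le_of_lintegral_le (ae_of_all _ fun x => ENNReal.two_mul_le_add_sq _ _)
      (hcross ▸ ENNReal.mul_ne_top ENNReal.ofNat_ne_top hG_sq)
      ((hG.pow_const 2).add (hĜ.pow_const 2)).aemeasurable hsum
  have hfin : ∀ᵐ x ∂m, G x ≠ ∞ ∧ Ĝ x ≠ ∞ := by
    filter_upwards [ae_lt_top (hG.pow_const 2) hG_sq,
      ae_lt_top (hĜ.pow_const 2) (ne_top_of_le_ne_top hG_sq hĜ_sq)] with x hGx hĜx
    exact ⟨by simpa using hGx.ne, by simpa using hĜx.ne⟩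
  filter_upwards [hsq_eq, hfin] with x hx ⟨hGx, hĜx⟩
  exact (ENNReal.eq_of_add_sq_le_two_mul hGx hĜx hx.ge).symm

lemma lintegral_kernel_tsub_const_ae_eq (hκ : ∀ x, κ x Set.univ ≤ 1) (hκm : κ ∘ₘ m ≤ m)
    {W : E → ℝ≥0∞} (hW : Measurable W) (hW_sub : ∀ᵐ x ∂m, W x ≤ ∫⁻ y, W y ∂κ x)
    {c : ℝ≥0∞} (hW_int : ∫⁻ x, W x - c ∂m ≠ ∞) :
    (fun x => ∫⁻ y, W y - c ∂κ x) =ᵐ[m] fun x => W x - c := by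
  refine lintegral_kernel_ae_eq_of_ae_le hκm (hW.sub measurable_const) hW_int ?_
  filter_upwards [hW_sub] with x hx
  exact (tsub_le_tsub_right hx c).trans (lintegral_sub_const_le_lintegral_tsub (hκ x) _ c)

lemma lintegral_kernel_min_tsub_ae_eq (hκ : ∀ x, κ x Set.univ ≤ 1) (hκm : κ ∘ₘ m ≤ m)
    {W : E → ℝ≥0∞} (hW : Measurable W) (hW_fin : ∀ x, W x ≠ ∞)
    (hW_sub : ∀ᵐ x ∂m, W x ≤ ∫⁻ y, W y ∂κ x) {c : ℝ≥0∞} (hW_int : ∫⁻ x, W x - c ∂m ≠ ∞)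
    (d : ℝ≥0∞) :
    (fun x => ∫⁻ y, min (W y - c) d ∂κ x) =ᵐ[m] fun x => min (W x - c) d := by
  have hW_int' : ∫⁻ x, W x - (c + d) ∂m ≠ ∞ :=
    ne_top_of_le_ne_top hW_int (lintegral_mono fun x => tsub_le_tsub_left le_self_add _)
  have hfix' := lintegral_kernel_tsub_const_ae_eq hκ hκm hW hW_sub hW_int'
  simp_rw [← tsub_tsub] at hfix'
  simp_rw [← ENNReal.sub_sub_eq_min (ne_top_of_le_ne_top (hW_fin _) tsub_le_self)]
  exact lintegral_kernel_tsub_ae_eq ((hW.sub measurable_const).sub measurable_const)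
    (fun x => tsub_le_self)
    (ae_of_all _ fun x => ne_top_of_le_ne_top (hW_fin x) (tsub_le_self.trans tsub_le_self))
    (lintegral_kernel_tsub_const_ae_eq hκ hκm hW hW_sub hW_int) hfix'

lemma lintegral_kernel_dual_ae_eq_of_ae_le (hκ : ∀ x, κ x Set.univ ≤ 1) (hκm : κ ∘ₘ m ≤ m)
    (hκ' : ∀ x, κ' x Set.univ ≤ 1) (hκ'm : κ' ∘ₘ m ≤ m)
    (hdual : KernelDuality m κ κ')
    {W : E → ℝ≥0∞} (hW : Measurable W) (hW_fin : ∀ x, W x ≠ ∞)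
    (hW_sub : ∀ᵐ x ∂m, W x ≤ ∫⁻ y, W y ∂κ x) (hW_int : ∀ c ≠ 0, ∫⁻ x, W x - c ∂m ≠ ∞) :
    (fun x => ∫⁻ y, W y ∂κ' x) =ᵐ[m] W := by
  set G : ℕ → E → ℝ≥0∞ := fun n x => min (W x - (n : ℝ≥0∞)⁻¹) n
  have hc : ∀ n : ℕ, (n : ℝ≥0∞)⁻¹ ≠ 0 := fun n => ENNReal.inv_ne_zero.2 (ENNReal.natCast_ne_top n)
  have hc_anti : Antitone fun n : ℕ => (n : ℝ≥0∞)⁻¹ := fun i j hij =>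
    ENNReal.inv_le_inv.2 (Nat.mono_cast hij)
  have hG : ∀ n, Measurable (G n) := fun n => (hW.sub measurable_const).min measurable_const
  have hG_mono : Monotone G := fun i j hij x =>
    min_le_min (tsub_le_tsub_left (hc_anti hij) _) (Nat.mono_cast hij)
  have hG_sup : ∀ x, ⨆ n, G n x = W x := fun x => by
    rw [iSup_inf_of_monotone (fun i j hij => tsub_le_tsub_left (hc_anti hij) _) Nat.mono_cast,
      ← ENNReal.sub_iInf, ← ENNReal.inv_iSup, ENNReal.iSup_natCast, ENNReal.inv_top, tsub_zero,
      min_top_right]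
  have hG_sq : ∀ n : ℕ, ∫⁻ x, G n x ^ 2 ∂m ≠ ∞ := fun n => by
    refine ne_top_of_le_ne_top
      (ENNReal.mul_ne_top (ENNReal.natCast_ne_top n) (hW_int _ (hc n))) ?_
    rw [← lintegral_const_mul _ (f := fun x => W x - (n : ℝ≥0∞)⁻¹) (hW.sub measurable_const)]
    exact lintegral_mono fun x =>
      (sq (G n x)).trans_le (mul_le_mul' (min_le_right _ _) (min_le_left _ _))
  have hG_fix : ∀ n, (fun x => ∫⁻ y, G n y ∂κ' x) =ᵐ[m] G n := fun n =>
    lintegral_kernel_dual_ae_eq_of_sq_lintegral_ne_top hκ' hκ'm hdual (hG n) (hG_sq n)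
      (lintegral_kernel_min_tsub_ae_eq hκ hκm hW hW_fin hW_sub (hW_int _ (hc n)) n)
  simpa only [hG_sup] using lintegral_kernel_iSup_ae_eq hG hG_mono hG_fix

lemma lintegral_kernel_ofReal_dual_ae_eq (hκ : ∀ x, κ x Set.univ ≤ 1) (hκm : κ ∘ₘ m ≤ m)
    (hκ' : ∀ x, κ' x Set.univ ≤ 1) (hκ'm : κ' ∘ₘ m ≤ m)
    (hdual : KernelDuality m κ κ')
    {w : E → ℝ} (hw : Measurable w) (hw_int : ∀ c ≠ 0, ∫⁻ x, ‖w x‖ₑ - c ∂m ≠ ∞)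
    (hw_fix : ∀ᵐ x ∂m, ∫ y, w y ∂κ x = w x) :
    (fun x => ∫⁻ y, ENNReal.ofReal (w y) ∂κ' x) =ᵐ[m] fun x => ENNReal.ofReal (w x) := by
  refine lintegral_kernel_dual_ae_eq_of_ae_le hκ hκm hκ' hκ'm hdual hw.ennreal_ofReal
    (fun _ => ENNReal.ofReal_ne_top) ?_ fun c hc => ?_
  · filter_upwards [hw_fix] with x hx
    rw [← hx]
    exact ofReal_integral_le_lintegral_ofReal _
  · exact ne_top_of_le_ne_top (hw_int c hc)
      (lintegral_mono fun x => tsub_le_tsub_right (Real.ofReal_le_enorm _) c)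

lemma integral_kernel_dual_ae_eq_of_measurable (hκ : ∀ x, κ x Set.univ ≤ 1)
    (hκm : κ ∘ₘ m ≤ m) (hκ' : ∀ x, κ' x Set.univ ≤ 1) (hκ'm : κ' ∘ₘ m ≤ m)
    (hdual : KernelDuality m κ κ')
    {w : E → ℝ} (hw : Measurable w) (hw_int : ∀ c ≠ 0, ∫⁻ x, ‖w x‖ₑ - c ∂m ≠ ∞)
    (hw_fix : ∀ᵐ x ∂m, ∫ y, w y ∂κ x = w x) :
    ∀ᵐ x ∂m, ∫ y, w y ∂κ' x = w x := by
  have hneg_fix : ∀ᵐ x ∂m, ∫ y, -w y ∂κ x = -w x := by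
    filter_upwards [hw_fix] with x hx
    rw [integral_neg, hx]
  filter_upwards [lintegral_kernel_ofReal_dual_ae_eq hκ hκm hκ' hκ'm hdual hw hw_int hw_fix,
    lintegral_kernel_ofReal_dual_ae_eq hκ hκm hκ' hκ'm hdual hw.neg (by simpa using hw_int)
      hneg_fix] with x hpos hneg
  exact integral_eq_of_lintegral_ofReal_eq hw.aestronglyMeasurable hpos hneg

theorem integral_kernel_dual_ae_eq (hκ : ∀ x, κ x Set.univ ≤ 1) (hκm : κ ∘ₘ m ≤ m)
    (hκ' : ∀ x, κ' x Set.univ ≤ 1) (hκ'm : κ' ∘ₘ m ≤ m)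
    (hdual : KernelDuality m κ κ')
    {p : ℝ≥0∞} (hp1 : 1 ≤ p) (hp : p ≠ ∞) {u : E → ℝ} (hu : MemLp u p m)
    (hu_fix : ∀ᵐ x ∂m, ∫ y, u y ∂κ x = u x) :
    ∀ᵐ x ∂m, ∫ y, u y ∂κ' x = u x := by
  set w := hu.1.mk u
  have huw : u =ᵐ[m] w := hu.1.ae_eq_mk
  have hw_fix : ∀ᵐ x ∂m, ∫ y, w y ∂κ x = w x := by
    filter_upwards [hu_fix, ae_integral_kernel_congr hκm huw, huw] with x hfix hcongr hx
    rw [← hcongr, hfix, hx]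
  filter_upwards [integral_kernel_dual_ae_eq_of_measurable hκ hκm hκ' hκ'm hdual
    hu.1.stronglyMeasurable_mk.measurable
    (fun c hc => (hu.ae_eq huw).lintegral_enorm_tsub_ne_top hp1 hp hc) hw_fix,
    ae_integral_kernel_congr hκ'm huw, huw] with x hfix hcongr hx
  rw [hcongr, hfix, hx]

end Kernel

section Resolvent

variable {E : Type*} [MeasurableSpace E]

noncomputable def resolventKernel (U : ℝ → Kernel E E) (α : ℝ) : Kernel E E :=
  ⟨fun x => ENNReal.ofReal α • U α x, Measure.measurable_of_measurable_coe _ fun _ hs => by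
    simpa using ((U α).measurable_coe hs).const_mul (ENNReal.ofReal α)⟩

variable {m : Measure E} {U Uhat : ℝ → Kernel E E} {α : ℝ}

lemma resolventKernel_apply (x : E) : resolventKernel U α x = ENNReal.ofReal α • U α x := rfl

lemma mul_Uop_eq_integral_resolventKernel (hα : 0 ≤ α) (u : E → ℝ) (x : E) :
    α * Uop U α u x = ∫ y, u y ∂resolventKernel U α x := by
  rw [resolventKernel_apply, integral_smul_measure, ENNReal.toReal_ofReal hα, smul_eq_mul, Uop]

lemma SubMarkovResolvent.resolventKernel_apply_univ_le_one (hU : SubMarkovResolvent U)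
    (hα : 0 < α) (x : E) : resolventKernel U α x Set.univ ≤ 1 :=
  calc ENNReal.ofReal α * U α x Set.univ ≤ ENNReal.ofReal α * ENNReal.ofReal α⁻¹ := by
        gcongr; exact hU α hα x
    _ = 1 := by rw [← ENNReal.ofReal_mul hα.le, mul_inv_cancel₀ hα.ne', ENNReal.ofReal_one]

lemma SubInvariantMeasure.comp_resolventKernel_le (hm : SubInvariantMeasure m U) (hα : 0 < α) :
    resolventKernel U α ∘ₘ m ≤ m := by
  refine Measure.le_iff.2 fun s hs => ?_
  have := hm α hα (s.indicator 1) (measurable_one.indicator hs)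
  rw [Measure.bind_apply hs (Kernel.aemeasurable _)]
  simpa [resolventKernel_apply, lintegral_indicator hs] using this

lemma WeakDuality.kernelDuality_resolventKernel (hdual : WeakDuality m U Uhat) (hα : 0 < α) :
    KernelDuality m (resolventKernel U α) (resolventKernel Uhat α) := fun f g hf hg => by
  simp only [resolventKernel_apply, lintegral_smul_measure, smul_eq_mul, mul_left_comm (f _),
    mul_left_comm (g _)]
  rw [lintegral_const_mul' _ _ ENNReal.ofReal_ne_top,
    lintegral_const_mul' _ _ ENNReal.ofReal_ne_top, hdual α hα f g hf hg]

lemma WeakDuality.symm (hdual : WeakDuality m U Uhat) : WeakDuality m Uhat U :=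
  fun α hα f g hf hg => (hdual α hα g f hg hf).symm

lemma ae_mul_Uop_dual_eq_of_ae_mul_Uop_eq (hU : SubMarkovResolvent U)
    (hUhat : SubMarkovResolvent Uhat) (hm : SubInvariantMeasure m U)
    (hmhat : SubInvariantMeasure m Uhat) (hdual : WeakDuality m U Uhat)
    {p : ℝ≥0∞} (hp1 : 1 ≤ p) (hp : p ≠ ∞) {u : E → ℝ} (hu : MemLp u p m)
    (hu_fix : ∀ α > (0:ℝ), (fun x => α * Uop U α u x) =ᵐ[m] u) :
    ∀ α > (0:ℝ), (fun x => α * Uop Uhat α u x) =ᵐ[m] u := by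
  intro α hα
  have hfix := hu_fix α hα
  simp only [mul_Uop_eq_integral_resolventKernel hα.le] at hfix ⊢
  exact integral_kernel_dual_ae_eq (hU.resolventKernel_apply_univ_le_one hα)
    (hm.comp_resolventKernel_le hα) (hUhat.resolventKernel_apply_univ_le_one hα)
    (hmhat.comp_resolventKernel_le hα) (hdual.kernelDuality_resolventKernel hα) hp1 hp hu hfix

end Resolvent

theorem resolvent_fixed_iff_dual_fixed_general
    {E : Type*} [MeasurableSpace E] (m : Measure E)
    (U Uhat : ℝ → Kernel E E)
    (hU : SubMarkovResolvent U) (hUhat : SubMarkovResolvent Uhat)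
    (hm : SubInvariantMeasure m U) (hmhat : SubInvariantMeasure m Uhat)
    (hdual : WeakDuality m U Uhat)
    (p : ℝ≥0∞) (hp1 : 1 ≤ p) (hp : p ≠ ∞)
    (u : E → ℝ) (hu : MemLp u p m) :
    (∀ α > (0:ℝ), (fun x => α * Uop U α u x) =ᵐ[m] u) ↔
      (∀ α > (0:ℝ), (fun x => α * Uop Uhat α u x) =ᵐ[m] u) :=
  ⟨ae_mul_Uop_dual_eq_of_ae_mul_Uop_eq hU hUhat hm hmhat hdual hp1 hp hu,
    ae_mul_Uop_dual_eq_of_ae_mul_Uop_eq hUhat hU hmhat hm hdual.symm hp1 hp hu⟩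

/-- For sub-Markovian resolvents `U`, `Û` in weak duality w.r.t. the σ-finite
sub-invariant measure `m` and `u ∈ L^p(E,m)`, `1 ≤ p < ∞`: `α U_α u = u` m-a.e. for all
`α > 0` iff `α Û_α u = u` m-a.e. for all `α > 0`. -/
theorem resolvent_fixed_iff_dual_fixed
    {E : Type*} [MeasurableSpace E] (m : Measure E) [SigmaFinite m]
    (U Uhat : ℝ → Kernel E E)
    (hU : SubMarkovResolvent U) (hUhat : SubMarkovResolvent Uhat)
    (hm : SubInvariantMeasure m U) (hmhat : SubInvariantMeasure m Uhat)
    (hdual : WeakDuality m U Uhat)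
    (p : ℝ≥0∞) (hp1 : 1 ≤ p) (hp : p ≠ ∞)
    (u : E → ℝ) (hu : MemLp u p m) :
    (∀ α > (0:ℝ), (fun x => α * Uop U α u x) =ᵐ[m] u) ↔
      (∀ α > (0:ℝ), (fun x => α * Uop Uhat α u x) =ᵐ[m] u) :=
  resolvent_fixed_iff_dual_fixed_general m U Uhat hU hUhat hm hmhat hdual p hp1 hp u hu
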